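/- For every α ≥ 1/2 and integer p ≥ 1, there exists a constant C < ∞ (depending only on α and p) such that the following holds. Let A^(1) ∈ ℝ^{n₀×n₁}, …, A^(p) ∈ ℝ^{n_{p−1}×n_p} be independent families of i.i.d. centered random variables with finite moment of order 2α, and let P := A^(1) ⋯ A^(p) ∈ ℝ^{n₀×n_p}. Then for every i ∈ {1,…,n₀} and j ∈ {1,…,n_p}, E[|P_{ij}|^{2α}] ≤ C (n₁ ⋯ n_{p−1})^{max(α,1)} E[|A^(1)_{11}|^{2α}] ⋯ E[|A^(p)_{11}|^{2α}]. -/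

import Mathlib

/-!
Put `r = 2α ≥ 1`. An entry of a product of `t + 2` factors is a sum `S_m = ∑_{j<m} b_j Z_j`,
where the `b_j` are entries of the product of the first `t + 1` factors and the `Z_j` are the
entries of one column of the last factor: each `Z_j` is centered and independent of everything
that `b_j` and `S_j` are built from. The elementary inequality, valid for every `M ≥ 1`,
`|x + y|^r ≤ |x|^r + r sgn(x) |x|^(r-1) y + K (|x|^r / M + M^(max(r/2, 1) - 1) |y|^r)`,
with `K = (r + 1)^2 2^r` (convexity of `|·|^r`; Hölder continuity of `t ↦ t^(r-1)` if `r ≤ 2`,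
its Lipschitz bound and Young's inequality if `r ≥ 2`), integrates, the cross term vanishing by
independence, to
`E|S_{j+1}|^r ≤ (1 + K/M) E|S_j|^r + K M^(max(r/2, 1) - 1) E|b_j|^r E|Z_j|^r`.
Choosing `M = m`, the `m` steps cost at most `(1 + K/m)^m ≤ e^K`, so
`E|S_m|^r ≤ K e^K m^max(r/2, 1) sup_j E|b_j|^r E|Z_j|^r`, and induction over the factors gives
the theorem with `C = (K e^K)^(p-1)`.
-/

open MeasureTheory ProbabilityTheory Finset

/-- The product of the `p+1` matrices `A 0, A 1, ..., A p`, where `A q` is viewed as a matrix of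
size `n q × n (q+1)`: `matProd n A p i k` is the `(i, k)` entry of this product. -/
noncomputable def matProd (n : ℕ → ℕ) (A : ℕ → ℕ → ℕ → ℝ) : ℕ → ℕ → ℕ → ℝ
  | 0 => A 0
  | p + 1 => fun i k => ∑ j ∈ Finset.range (n (p + 1)), matProd n A p i j * A (p + 1) j k

open Real

namespace Real

lemma rpow_sub_one_mul_self {r x : ℝ} (hr : r ≠ 0) (hx : 0 ≤ x) : x ^ (r - 1) * x = x ^ r := by
  rw [← rpow_add_one' hx (by simpa using hr), sub_add_cancel]

lemma rpow_tangent_le {s a b : ℝ} (hs : 1 ≤ s) (ha : 0 < a) (hb : 0 ≤ b) :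
    a ^ s + s * a ^ (s - 1) * (b - a) ≤ b ^ s := by
  have bernoulli := one_add_mul_self_le_rpow_one_add
    (show -1 ≤ (b - a) / a by rw [le_div_iff₀ ha]; linarith) hs
  rw [show 1 + (b - a) / a = b / a by field_simp; ring, div_rpow hb ha.le,
    le_div_iff₀ (rpow_pos_of_pos ha s)] at bernoulli
  calc a ^ s + s * a ^ (s - 1) * (b - a) = (1 + s * ((b - a) / a)) * a ^ s := by
        rw [rpow_sub_one ha.ne']; field_simp
    _ ≤ b ^ s := bernoulli

lemma abs_rpow_sub_rpow_le_of_le_one {s a b : ℝ} (hs₀ : 0 ≤ s) (hs₁ : s ≤ 1) (ha : 0 ≤ a)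
    (hb : 0 ≤ b) : |a ^ s - b ^ s| ≤ |a - b| ^ s := by
  wlog hba : b ≤ a generalizing a b
  · rw [abs_sub_comm, abs_sub_comm a]; exact this hb ha (le_of_not_ge hba)
  have hsub := rpow_add_le_add_rpow hb (sub_nonneg.2 hba) hs₀ hs₁
  rw [add_sub_cancel] at hsub
  rw [abs_of_nonneg (sub_nonneg.2 (rpow_le_rpow hb hba hs₀)), abs_of_nonneg (sub_nonneg.2 hba)]
  linarith

lemma abs_rpow_sub_rpow_le_of_one_le {s a b : ℝ} (hs : 1 ≤ s) (ha : 0 ≤ a) (hb : 0 ≤ b) :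
    |a ^ s - b ^ s| ≤ s * max a b ^ (s - 1) * |a - b| := by
  wlog hba : b ≤ a generalizing a b
  · rw [abs_sub_comm, abs_sub_comm a, max_comm]; exact this hb ha (le_of_not_ge hba)
  rw [max_eq_left hba, abs_of_nonneg (sub_nonneg.2 (rpow_le_rpow hb hba (by linarith))),
    abs_of_nonneg (sub_nonneg.2 hba)]
  rcases ha.eq_or_lt with rfl | ha
  · rw [le_antisymm hba hb]; simp
  · linarith [rpow_tangent_le hs ha hb]

lemma rpow_sub_one_mul_le_rpow_add_rpow {r a c : ℝ} (hr : 1 ≤ r) (ha : 0 ≤ a) (hc : 0 ≤ c) :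
    a ^ (r - 1) * c ≤ a ^ r + c ^ r := by
  have self_mul : ∀ x : ℝ, 0 ≤ x → x ^ (r - 1) * x = x ^ r :=
    fun _ => rpow_sub_one_mul_self (by linarith)
  rcases le_total a c with h | h
  · calc a ^ (r - 1) * c ≤ c ^ (r - 1) * c := by gcongr
      _ ≤ a ^ r + c ^ r := by rw [self_mul c hc]; linarith [rpow_nonneg ha r]
  · calc a ^ (r - 1) * c ≤ a ^ (r - 1) * a := by gcongr
      _ ≤ a ^ r + c ^ r := by rw [self_mul a ha]; linarith [rpow_nonneg hc r]

lemma rpow_sub_two_mul_sq_le {r M u v : ℝ} (hr : 2 ≤ r) (hM : 0 < M) (hu : 0 ≤ u) :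
    u ^ (r - 2) * v ^ 2 ≤ u ^ r / M + M ^ ((r - 2) / 2) * |v| ^ r := by
  have mul_sq : ∀ x : ℝ, 0 ≤ x → x ^ (r - 2) * x ^ 2 = x ^ r := fun x hx => by
    rw [← rpow_natCast, ← rpow_add' hx (by norm_num; linarith)]; norm_num
  have sq_rpow : ∀ x : ℝ, 0 ≤ x → (x ^ 2) ^ ((r - 2) / 2) = x ^ (r - 2) := fun x hx => by
    rw [← rpow_natCast, ← rpow_mul hx]; ring_nf
  rcases le_total (u ^ 2) (M * v ^ 2) with h | h
  · calc u ^ (r - 2) * v ^ 2 ≤ (M ^ ((r - 2) / 2) * |v| ^ (r - 2)) * |v| ^ 2 := by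
          rw [sq_abs, ← sq_rpow u hu, ← sq_rpow |v| (abs_nonneg v), sq_abs,
            ← mul_rpow hM.le (sq_nonneg v)]
          gcongr
      _ = M ^ ((r - 2) / 2) * |v| ^ r := by rw [mul_assoc, mul_sq _ (abs_nonneg v)]
      _ ≤ u ^ r / M + M ^ ((r - 2) / 2) * |v| ^ r := by
          have : 0 ≤ u ^ r / M := by positivity
          linarith
  · calc u ^ (r - 2) * v ^ 2 ≤ u ^ (r - 2) * (u ^ 2 / M) := by
          gcongr; rw [le_div_iff₀ hM]; linarith
      _ = u ^ r / M := by rw [← mul_div_assoc, mul_sq u hu]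
      _ ≤ u ^ r / M + M ^ ((r - 2) / 2) * |v| ^ r := by
          have : 0 ≤ M ^ ((r - 2) / 2) * |v| ^ r := by positivity
          linarith

end Real

-- `x / |x|` is the sign of `x` (`0 / 0 = 0`); away from `0` this is the derivative of `|x| ^ r`.
noncomputable def absRpowDeriv (r x : ℝ) : ℝ := r * (x / |x|) * |x| ^ (r - 1)

lemma measurable_absRpowDeriv (r : ℝ) : Measurable (absRpowDeriv r) := by
  unfold absRpowDeriv; fun_prop

lemma abs_absRpowDeriv_le {r : ℝ} (hr : 0 ≤ r) (x : ℝ) :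
    |absRpowDeriv r x| ≤ r * |x| ^ (r - 1) := by
  have hsign : abs (x / |x|) ≤ 1 := by rw [abs_div, abs_abs]; exact div_self_le_one _
  rw [absRpowDeriv, abs_mul, abs_mul, abs_of_nonneg hr,
    abs_of_nonneg (rpow_nonneg (abs_nonneg x) _)]
  calc r * abs (x / |x|) * |x| ^ (r - 1) ≤ r * 1 * |x| ^ (r - 1) := by gcongr
    _ = r * |x| ^ (r - 1) := by ring

lemma mul_abs_mul_abs_rpow_sub_rpow_le {r M u v : ℝ} (hr : 1 ≤ r) (hM : 1 ≤ M) (hu : 0 < u)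
    (hv : |v| < u) :
    r * |v| * |(u + v) ^ (r - 1) - u ^ (r - 1)| ≤
      (r + 1) ^ 2 * 2 ^ r * (u ^ r / M + M ^ (max (r / 2) 1 - 1) * |v| ^ r) := by
  have huv : 0 ≤ u + v := by linarith [neg_abs_le v]
  have h2r : 1 ≤ (2 : ℝ) ^ r := one_le_rpow (by norm_num) (by linarith)
  rcases le_total r 2 with hr2 | hr2
  · have hdiff := abs_rpow_sub_rpow_le_of_le_one (s := r - 1) (by linarith) (by linarith) huv hu.le
    rw [add_sub_cancel_left] at hdiff
    rw [max_eq_right (by linarith), sub_self, rpow_zero, one_mul]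
    calc r * |v| * |(u + v) ^ (r - 1) - u ^ (r - 1)| ≤ r * (|v| ^ (r - 1) * |v|) := by
          rw [mul_comm (|v| ^ _), ← mul_assoc]; gcongr
      _ = r * |v| ^ r := by rw [rpow_sub_one_mul_self (by linarith) (abs_nonneg v)]
      _ ≤ (r + 1) ^ 2 * 2 ^ r * (u ^ r / M + |v| ^ r) := by
          have : 0 ≤ u ^ r / M := by positivity
          have : r ≤ (r + 1) ^ 2 * 2 ^ r := by nlinarith
          gcongr ?_ * ?_
          linarith
  · have hdiff := abs_rpow_sub_rpow_le_of_one_le (s := r - 1) (by linarith) huv hu.le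
    rw [add_sub_cancel_left, show r - 1 - 1 = r - 2 by ring] at hdiff
    have hmax : max (u + v) u ^ (r - 2) ≤ 2 ^ r * u ^ (r - 2) :=
      calc max (u + v) u ^ (r - 2) ≤ (2 * u) ^ (r - 2) := by
            gcongr; exact max_le (by linarith [le_abs_self v]) (by linarith)
        _ = 2 ^ (r - 2) * u ^ (r - 2) := mul_rpow (by norm_num) hu.le
        _ ≤ 2 ^ r * u ^ (r - 2) := by gcongr <;> linarith
    rw [max_eq_left (by linarith), show r / 2 - 1 = (r - 2) / 2 by ring]
    calc r * |v| * |(u + v) ^ (r - 1) - u ^ (r - 1)|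
        ≤ r * |v| * ((r - 1) * (2 ^ r * u ^ (r - 2)) * |v|) := by
          gcongr; exact hdiff.trans (by gcongr)
      _ = r * (r - 1) * 2 ^ r * (u ^ (r - 2) * v ^ 2) := by rw [← sq_abs v]; ring
      _ ≤ (r + 1) ^ 2 * 2 ^ r * (u ^ r / M + M ^ ((r - 2) / 2) * |v| ^ r) := by
          gcongr ?_ * ?_
          · nlinarith
          · exact rpow_sub_two_mul_sq_le hr2 (by linarith) hu.le

lemma add_rpow_le_of_abs_lt {r M u v : ℝ} (hr : 1 ≤ r) (hM : 1 ≤ M) (hu : 0 < u) (hv : |v| < u) :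
    (u + v) ^ r ≤ u ^ r + r * u ^ (r - 1) * v +
      (r + 1) ^ 2 * 2 ^ r * (u ^ r / M + M ^ (max (r / 2) 1 - 1) * |v| ^ r) := by
  have huv : 0 < u + v := by linarith [neg_abs_le v]
  have tangent := rpow_tangent_le hr huv hu.le
  have hcross : v * ((u + v) ^ (r - 1) - u ^ (r - 1)) ≤ |v| * |(u + v) ^ (r - 1) - u ^ (r - 1)| :=
    abs_mul v _ ▸ le_abs_self _
  have := mul_abs_mul_abs_rpow_sub_rpow_le hr hM hu hv
  nlinarith

lemma abs_add_rpow_le {r M : ℝ} (hr : 1 ≤ r) (hM : 1 ≤ M) (x y : ℝ) :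
    |x + y| ^ r ≤ |x| ^ r + absRpowDeriv r x * y +
      (r + 1) ^ 2 * 2 ^ r * (|x| ^ r / M + M ^ (max (r / 2) 1 - 1) * |y| ^ r) := by
  have hK : 0 ≤ (r + 1) ^ 2 * 2 ^ r := by positivity
  have hMγ : 1 ≤ M ^ (max (r / 2) 1 - 1) := one_le_rpow hM (by simp)
  rcases lt_or_ge |y| |x| with hyx | hxy
  · have hx : 0 < |x| := (abs_nonneg y).trans_lt hyx
    have hsign : abs (x / |x|) = 1 := by rw [abs_div, abs_abs, div_self hx.ne']
    have hv : |x / |x| * y| = |y| := by rw [abs_mul, hsign, one_mul]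
    have hsx : x / |x| * x = |x| := by
      rw [div_mul_eq_mul_div, ← abs_mul_abs_self x, mul_div_cancel_right₀ _ hx.ne']
    have hxy : |x + y| = |x| + x / |x| * y := by
      rw [← one_mul |x + y|, ← hsign, ← abs_mul, mul_add, hsx]
      exact abs_of_pos (by linarith [neg_abs_le (x / |x| * y)])
    have := add_rpow_le_of_abs_lt hr hM hx (hv ▸ hyx)
    rw [hxy, absRpowDeriv, ← hv]
    linarith
  · have hsum : |x + y| ^ r ≤ 2 ^ r * |y| ^ r := by
      rw [← mul_rpow (by norm_num) (abs_nonneg y)]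
      gcongr
      linarith [abs_add_le x y]
    have hcross : |absRpowDeriv r x * y| ≤ r * |y| ^ r := by
      calc |absRpowDeriv r x * y| ≤ r * |y| ^ (r - 1) * |y| := by
            rw [abs_mul]; gcongr
            exact (abs_absRpowDeriv_le (by linarith) x).trans (by gcongr)
        _ = r * |y| ^ r := by rw [mul_assoc, rpow_sub_one_mul_self (by linarith) (abs_nonneg y)]
    have hcoef : 2 ^ r + r ≤ (r + 1) ^ 2 * 2 ^ r := by
      have h2r : 1 ≤ (2 : ℝ) ^ r := one_le_rpow (by norm_num) (by linarith)
      nlinarith [mul_nonneg (by positivity : 0 ≤ r ^ 2 + 2 * r) (sub_nonneg.2 h2r)]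
    have : 0 ≤ |x| ^ r / M := by positivity
    have : (2 ^ r + r) * |y| ^ r ≤ (r + 1) ^ 2 * 2 ^ r * (M ^ (max (r / 2) 1 - 1) * |y| ^ r) := by
      rw [← mul_assoc]; gcongr; nlinarith
    nlinarith [neg_abs_le (absRpowDeriv r x * y), rpow_nonneg (abs_nonneg x) r]

lemma le_mul_pow_mul_of_le_mul_add {a : ℕ → ℝ} {q d : ℝ} (h0 : a 0 = 0) (hq : 1 ≤ q)
    (hd : 0 ≤ d) (h : ∀ j, a (j + 1) ≤ q * a j + d) (j : ℕ) : a j ≤ j * q ^ j * d := by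
  induction j with
  | zero => simp [h0]
  | succ j ih =>
    have hqj : 1 ≤ q ^ (j + 1) := one_le_pow₀ hq
    calc a (j + 1) ≤ q * (j * q ^ j * d) + d := (h j).trans (by gcongr)
      _ ≤ j * q ^ (j + 1) * d + q ^ (j + 1) * d := by
        have := le_mul_of_one_le_left hd hqj
        rw [pow_succ] at this ⊢; linarith
      _ = (j + 1 : ℕ) * q ^ (j + 1) * d := by push_cast; ring

noncomputable def momentConst (r : ℝ) : ℝ := (r + 1) ^ 2 * 2 ^ r * Real.exp ((r + 1) ^ 2 * 2 ^ r)

section Moments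

variable {Ω : Type*} {m0 : MeasurableSpace Ω} {μ : Measure Ω}

lemma memLp_ofReal_iff_integrable_abs_rpow {r : ℝ} (hr : 0 < r) {f : Ω → ℝ}
    (hf : AEStronglyMeasurable f μ) :
    MemLp f (ENNReal.ofReal r) μ ↔ Integrable (fun ω => |f ω| ^ r) μ := by
  rw [← integrable_norm_rpow_iff hf (by simpa using hr) ENNReal.ofReal_ne_top,
    ENNReal.toReal_ofReal hr.le]
  rfl

lemma MeasureTheory.MemLp.integrable_abs_rpow {r : ℝ} (hr : 0 < r) {f : Ω → ℝ}
    (hf : MemLp f (ENNReal.ofReal r) μ) : Integrable (fun ω => |f ω| ^ r) μ :=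
  (memLp_ofReal_iff_integrable_abs_rpow hr hf.1).1 hf

lemma ProbabilityTheory.IndepFun.of_measurable_of_indep {F : MeasurableSpace Ω} {β γ : Type*}
    [MeasurableSpace β] [mγ : MeasurableSpace γ] {f : Ω → β} {g : Ω → γ} (hf : Measurable[F] f)
    (h : Indep F (mγ.comap g) μ) : IndepFun f g μ :=
  (IndepFun_iff_Indep f g μ).2 (indep_of_indep_of_le_left h hf.comap_le)

lemma ProbabilityTheory.IndepFun.integral_abs_mul_rpow {X Y : Ω → ℝ} (hXY : IndepFun X Y μ)
    (hX : AEStronglyMeasurable X μ) (hY : AEStronglyMeasurable Y μ) (r : ℝ) :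
    ∫ ω, |X ω * Y ω| ^ r ∂μ = (∫ ω, |X ω| ^ r ∂μ) * ∫ ω, |Y ω| ^ r ∂μ := by
  simp_rw [abs_mul, Real.mul_rpow (abs_nonneg _) (abs_nonneg _)]
  have habs : Measurable fun x : ℝ => |x| ^ r := measurable_abs.pow_const r
  exact (hXY.comp habs habs).integral_fun_mul_eq_mul_integral
    (habs.comp_aemeasurable hX.aemeasurable).aestronglyMeasurable
    (habs.comp_aemeasurable hY.aemeasurable).aestronglyMeasurable

lemma ProbabilityTheory.IndepFun.memLp_mul {r : ℝ} (hr : 0 < r) {X Y : Ω → ℝ}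
    (hXY : IndepFun X Y μ) (hX : MemLp X (ENNReal.ofReal r) μ) (hY : MemLp Y (ENNReal.ofReal r) μ) :
    MemLp (X * Y) (ENNReal.ofReal r) μ := by
  rw [memLp_ofReal_iff_integrable_abs_rpow hr (hX.1.mul hY.1)]
  simp_rw [Pi.mul_apply, abs_mul, Real.mul_rpow (abs_nonneg _) (abs_nonneg _)]
  have habs : Measurable fun x : ℝ => |x| ^ r := measurable_abs.pow_const r
  exact (hXY.comp habs habs).integrable_mul (hX.integrable_abs_rpow hr) (hY.integrable_abs_rpow hr)

lemma integrable_absRpowDeriv_mul {r : ℝ} (hr : 1 ≤ r) {X b : Ω → ℝ}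
    (hX : MemLp X (ENNReal.ofReal r) μ) (hb : MemLp b (ENNReal.ofReal r) μ) :
    Integrable (fun ω => absRpowDeriv r (X ω) * b ω) μ := by
  have hdom := ((hX.integrable_abs_rpow (by linarith)).add
    (hb.integrable_abs_rpow (by linarith))).const_mul r
  have hmeas := ((measurable_absRpowDeriv r).comp_aemeasurable hX.1.aemeasurable).mul
    hb.1.aemeasurable
  refine hdom.mono' hmeas.aestronglyMeasurable (ae_of_all _ fun ω => ?_)
  calc |absRpowDeriv r (X ω) * b ω| ≤ r * |X ω| ^ (r - 1) * |b ω| := by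
        rw [abs_mul]; gcongr; exact abs_absRpowDeriv_le (by linarith) _
    _ ≤ r * (|X ω| ^ r + |b ω| ^ r) := by
        rw [mul_assoc]; gcongr
        exact Real.rpow_sub_one_mul_le_rpow_add_rpow hr (abs_nonneg _) (abs_nonneg _)

variable [IsProbabilityMeasure μ]

lemma integral_abs_add_mul_rpow_le {F : MeasurableSpace Ω} {r M : ℝ} (hr : 1 ≤ r)
    (hM : 1 ≤ M) {X b Z : Ω → ℝ} (hX : Measurable[F] X) (hb : Measurable[F] b)
    (hindep : Indep F (MeasurableSpace.comap Z inferInstance) μ)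
    (hXL : MemLp X (ENNReal.ofReal r) μ) (hbL : MemLp b (ENNReal.ofReal r) μ)
    (hZL : MemLp Z (ENNReal.ofReal r) μ) (hZ0 : ∫ ω, Z ω ∂μ = 0) :
    ∫ ω, |X ω + b ω * Z ω| ^ r ∂μ ≤ ∫ ω, |X ω| ^ r ∂μ + (r + 1) ^ 2 * 2 ^ r *
      ((∫ ω, |X ω| ^ r ∂μ) / M +
        M ^ (max (r / 2) 1 - 1) * ((∫ ω, |b ω| ^ r ∂μ) * ∫ ω, |Z ω| ^ r ∂μ)) := by
  have hr₀ : 0 < r := by linarith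
  set G : Ω → ℝ := fun ω => absRpowDeriv r (X ω) * b ω
  have hG : Measurable[F] G := ((measurable_absRpowDeriv r).comp hX).mul hb
  have hGZ : IndepFun G Z μ := .of_measurable_of_indep hG hindep
  have hbZ : IndepFun b Z μ := .of_measurable_of_indep hb hindep
  have hXi := hXL.integrable_abs_rpow hr₀
  have hGi : Integrable G μ := integrable_absRpowDeriv_mul hr hXL hbL
  have hGZi : Integrable (fun ω => G ω * Z ω) μ :=
    hGZ.integrable_mul hGi (hZL.integrable (by simpa using hr))
  have hcross : ∫ ω, G ω * Z ω ∂μ = 0 := by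
    rw [hGZ.integral_fun_mul_eq_mul_integral hGi.1 hZL.1, hZ0, mul_zero]
  have hWi : Integrable (fun ω => |b ω * Z ω| ^ r) μ :=
    (hbZ.memLp_mul hr₀ hbL hZL).integrable_abs_rpow hr₀
  have hRi : Integrable (fun ω => |X ω| ^ r / M + M ^ (max (r / 2) 1 - 1) * |b ω * Z ω| ^ r) μ :=
    (hXi.div_const M).add (hWi.const_mul _)
  calc ∫ ω, |X ω + b ω * Z ω| ^ r ∂μ
      ≤ ∫ ω, (|X ω| ^ r + G ω * Z ω + (r + 1) ^ 2 * 2 ^ r *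
          (|X ω| ^ r / M + M ^ (max (r / 2) 1 - 1) * |b ω * Z ω| ^ r)) ∂μ := by
        refine integral_mono_of_nonneg (ae_of_all _ fun ω => by positivity)
          ((hXi.add hGZi).add (hRi.const_mul _)) (ae_of_all _ fun ω => ?_)
        simpa only [G, mul_assoc] using abs_add_rpow_le hr hM (X ω) (b ω * Z ω)
    _ = ∫ ω, |X ω| ^ r ∂μ + (r + 1) ^ 2 * 2 ^ r *
          ((∫ ω, |X ω| ^ r ∂μ) / M + M ^ (max (r / 2) 1 - 1) * ∫ ω, |b ω * Z ω| ^ r ∂μ) := by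
        have hXGZi : Integrable (fun ω => |X ω| ^ r + G ω * Z ω) μ := hXi.add hGZi
        rw [integral_add hXGZi (hRi.const_mul _), integral_add hXi hGZi, hcross, add_zero,
          integral_const_mul, integral_add (hXi.div_const M) (hWi.const_mul _), integral_div,
          integral_const_mul]
    _ = _ := by rw [hbZ.integral_abs_mul_rpow hbL.1 hZL.1]

theorem integral_abs_sum_mul_rpow_le (ℱ : Filtration ℕ m0) {r : ℝ} (hr : 1 ≤ r)
    {b Z : ℕ → Ω → ℝ} (hb : ∀ j, Measurable[ℱ j] (b j)) (hZ : ∀ j, Measurable[ℱ (j + 1)] (Z j))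
    (hindep : ∀ j, Indep (ℱ j) (MeasurableSpace.comap (Z j) inferInstance) μ)
    (hbL : ∀ j, MemLp (b j) (ENNReal.ofReal r) μ) (hZL : ∀ j, MemLp (Z j) (ENNReal.ofReal r) μ)
    (hZ0 : ∀ j, ∫ ω, Z j ω ∂μ = 0) {c : ℝ}
    (hc : ∀ j, (∫ ω, |b j ω| ^ r ∂μ) * ∫ ω, |Z j ω| ^ r ∂μ ≤ c) (m : ℕ) :
    ∫ ω, |∑ j ∈ range m, b j ω * Z j ω| ^ r ∂μ ≤ momentConst r * m ^ max (r / 2) 1 * c := by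
  have hr₀ : 0 < r := by linarith
  have hc₀ : 0 ≤ c := (mul_nonneg (integral_nonneg fun _ => by positivity)
    (integral_nonneg fun _ => by positivity)).trans (hc 0)
  rcases m.eq_zero_or_pos with rfl | hm
  · simp [Real.zero_rpow hr₀.ne', Real.zero_rpow (by positivity : max (r / 2) 1 ≠ 0)]
  set K := (r + 1) ^ 2 * 2 ^ r with hK
  set γ := max (r / 2) 1 - 1 with hγ
  set a : ℕ → ℝ := fun j => ∫ ω, |∑ l ∈ range j, b l ω * Z l ω| ^ r ∂μ
  have hM : (1 : ℝ) ≤ m := by exact_mod_cast hm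
  have hMγ : 0 ≤ (m : ℝ) ^ γ := by positivity
  have hS : ∀ j, Measurable[ℱ j] fun ω => ∑ l ∈ range j, b l ω * Z l ω := fun j =>
    Finset.measurable_sum _ fun l hl => by
      rw [mem_range] at hl
      exact ((hb l).mono (ℱ.mono hl.le) le_rfl).mul ((hZ l).mono (ℱ.mono hl) le_rfl)
  have hSL : ∀ j, MemLp (fun ω => ∑ l ∈ range j, b l ω * Z l ω) (ENNReal.ofReal r) μ := fun j =>
    memLp_finsetSum _ fun l _ =>
      (IndepFun.of_measurable_of_indep (hb l) (hindep l)).memLp_mul hr₀ (hbL l) (hZL l)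
  have hstep : ∀ j, a (j + 1) ≤ (1 + K / m) * a j + K * m ^ γ * c := by
    intro j
    have hone := integral_abs_add_mul_rpow_le hr hM (hS j) (hb j) (hindep j) (hSL j)
      (hbL j) (hZL j) (hZ0 j)
    rw [← hK, ← hγ] at hone
    have := mul_le_mul_of_nonneg_left (mul_le_mul_of_nonneg_left (hc j) hMγ)
      (show 0 ≤ K by positivity)
    simp only [a, sum_range_succ]
    linear_combination hone + this
  have hexp : (1 + K / m) ^ m ≤ Real.exp K := by
    have := Real.one_sub_div_pow_le_exp_neg (n := m) (t := -K)
      (by linarith [show 0 ≤ K by positivity])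
    rwa [neg_div, sub_neg_eq_add, neg_neg] at this
  have hmγ : (m : ℝ) ^ max (r / 2) 1 = m ^ γ * m := by
    rw [← Real.rpow_add_one (by positivity), sub_add_cancel]
  calc a m ≤ m * (1 + K / m) ^ m * (K * m ^ γ * c) :=
        le_mul_pow_mul_of_le_mul_add (by simp [a, Real.zero_rpow hr₀.ne'])
          (le_add_of_nonneg_right (by positivity)) (by positivity)
          hstep m
    _ ≤ m * Real.exp K * (K * m ^ γ * c) := by gcongr
    _ = momentConst r * m ^ max (r / 2) 1 * c := by rw [momentConst, hmγ]; ring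

end Moments

section IndexFiltration

variable {Ω ι β : Type*} {m0 : MeasurableSpace Ω} [mβ : MeasurableSpace β]

def indexFiltration (X : ι → Ω → β) (hX : ∀ i, Measurable (X i)) (s : ℕ → Set ι)
    (hs : Monotone s) : Filtration ℕ m0 where
  seq j := ⨆ i ∈ s j, mβ.comap (X i)
  mono' _ _ hjk := biSup_mono fun _ hi => hs hjk hi
  le' _ := iSup₂_le fun i _ => (hX i).comap_le

variable {X : ι → Ω → β} {hX : ∀ i, Measurable (X i)} {s : ℕ → Set ι} {hs : Monotone s}

lemma measurable_indexFiltration {i : ι} {j : ℕ} (hi : i ∈ s j) :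
    Measurable[indexFiltration X hX s hs j] (X i) :=
  Measurable.of_comap_le (le_iSup₂ (f := fun i (_ : i ∈ s j) => mβ.comap (X i)) i hi)

lemma indep_indexFiltration {μ : Measure Ω} (hind : iIndepFun X μ) {i : ι} {j : ℕ}
    (hi : i ∉ s j) : Indep (indexFiltration X hX s hs j) (mβ.comap (X i)) μ := by
  show Indep (⨆ i ∈ s j, mβ.comap (X i)) _ μ
  simpa using indep_iSup_of_disjoint (fun i => (hX i).comap_le)
    ((iIndepFun_iff_iIndep _ X μ).1 hind) (Set.disjoint_singleton_right.2 hi)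

end IndexFiltration

section MatrixProduct

variable {Ω : Type*} {m0 : MeasurableSpace Ω} {μ : Measure Ω}

lemma measurable_matProd {m : MeasurableSpace Ω} (n : ℕ → ℕ) {A : ℕ → ℕ → ℕ → Ω → ℝ} {t : ℕ}
    (hA : ∀ q ≤ t, ∀ i j, Measurable (A q i j)) (i j : ℕ) :
    Measurable fun ω => matProd n (fun q i j => A q i j ω) t i j := by
  induction t generalizing j with
  | zero => exact hA 0 le_rfl i j
  | succ t ih =>
    exact Finset.measurable_sum _ fun l _ =>
      (ih (fun q hq => hA q (hq.trans t.le_succ)) l).mul (hA (t + 1) le_rfl l j)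

lemma exists_filtration_matProd (n : ℕ → ℕ) {A : ℕ → ℕ → ℕ → Ω → ℝ}
    (hA : ∀ q i j, Measurable (A q i j))
    (hind : iIndepFun (fun e : ℕ × ℕ × ℕ => A e.1 e.2.1 e.2.2) μ) (t k : ℕ) :
    ∃ ℱ : Filtration ℕ m0,
      (∀ i j, Measurable[ℱ j] fun ω => matProd n (fun q i j => A q i j ω) t i j) ∧
      (∀ j, Measurable[ℱ (j + 1)] (A (t + 1) j k)) ∧
      ∀ j, Indep (ℱ j) (MeasurableSpace.comap (A (t + 1) j k) inferInstance) μ := by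
  let s : ℕ → Set (ℕ × ℕ × ℕ) := fun j => {e | e.1 ≤ t ∨ e.1 = t + 1 ∧ e.2.1 < j ∧ e.2.2 = k}
  have hs : Monotone s := fun _ _ hjj' _ he => he.imp id fun h => ⟨h.1, h.2.1.trans_le hjj', h.2.2⟩
  refine ⟨indexFiltration _ (fun e => hA e.1 e.2.1 e.2.2) s hs, fun i j => ?_, fun j => ?_,
    fun j => ?_⟩
  · exact measurable_matProd n (fun q hq x y => measurable_indexFiltration (s := s) (i := (q, x, y))
      (Or.inl hq)) i j
  · exact measurable_indexFiltration (s := s) (i := (t + 1, j, k))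
      (Or.inr ⟨rfl, j.lt_succ_self, rfl⟩)
  · exact indep_indexFiltration (s := s) (i := (t + 1, j, k)) hind (by simp [s])

lemma memLp_matProd {r : ℝ} (hr : 0 < r) (n : ℕ → ℕ) {A : ℕ → ℕ → ℕ → Ω → ℝ}
    (hA : ∀ q i j, Measurable (A q i j))
    (hind : iIndepFun (fun e : ℕ × ℕ × ℕ => A e.1 e.2.1 e.2.2) μ) {t : ℕ}
    (hL : ∀ q ≤ t, ∀ i j, MemLp (A q i j) (ENNReal.ofReal r) μ) (i k : ℕ) :
    MemLp (fun ω => matProd n (fun q i j => A q i j ω) t i k) (ENNReal.ofReal r) μ := by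
  induction t generalizing k with
  | zero => exact hL 0 le_rfl i k
  | succ t ih =>
    obtain ⟨ℱ, hP, -, hindep⟩ := exists_filtration_matProd n hA hind t k
    exact memLp_finsetSum _ fun j _ =>
      (IndepFun.of_measurable_of_indep (hP i j) (hindep j)).memLp_mul hr
        (ih (fun q hq => hL q (hq.trans t.le_succ)) j) (hL (t + 1) le_rfl j k)

variable [IsProbabilityMeasure μ]

theorem integral_abs_matProd_rpow_le {r : ℝ} (hr : 1 ≤ r) (n : ℕ → ℕ) {A : ℕ → ℕ → ℕ → Ω → ℝ}
    (hA : ∀ q i j, Measurable (A q i j))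
    (hind : iIndepFun (fun e : ℕ × ℕ × ℕ => A e.1 e.2.1 e.2.2) μ) {M : ℕ → ℝ} {t : ℕ}
    (hL : ∀ q ≤ t, ∀ i j, MemLp (A q i j) (ENNReal.ofReal r) μ)
    (hcen : ∀ q ≤ t, ∀ i j, ∫ ω, A q i j ω ∂μ = 0)
    (hM : ∀ q ≤ t, ∀ i j, ∫ ω, |A q i j ω| ^ r ∂μ ≤ M q) (i k : ℕ) :
    ∫ ω, |matProd n (fun q i j => A q i j ω) t i k| ^ r ∂μ ≤
      momentConst r ^ t * (∏ q ∈ Ioo 0 (t + 1), (n q : ℝ)) ^ max (r / 2) 1 *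
        ∏ q ∈ range (t + 1), M q := by
  induction t generalizing k with
  | zero =>
    rw [Ioo_add_one_right_eq_Ioc]
    simpa [matProd] using hM 0 le_rfl i k
  | succ t ih =>
    obtain ⟨ℱ, hP, hZ, hindep⟩ := exists_filtration_matProd n hA hind t k
    have hL' : ∀ q ≤ t, ∀ i j, MemLp (A q i j) (ENNReal.ofReal r) μ :=
      fun q hq => hL q (hq.trans t.le_succ)
    have ih' := fun j => ih hL' (fun q hq => hcen q (hq.trans t.le_succ))
      (fun q hq => hM q (hq.trans t.le_succ)) j
    have hc := fun j => mul_le_mul (ih' j) (hM (t + 1) le_rfl j k)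
      (integral_nonneg fun _ => by positivity)
      ((integral_nonneg fun _ => by positivity).trans (ih' j))
    have hsum := integral_abs_sum_mul_rpow_le ℱ hr (hP i) hZ hindep
      (memLp_matProd (by linarith) n hA hind hL' i) (fun j => hL (t + 1) le_rfl j k)
      (fun j => hcen (t + 1) le_rfl j k) hc (n (t + 1))
    refine hsum.trans_eq ?_
    rw [Ioo_add_one_right_eq_Ioc, Ioo_add_one_right_eq_Ioc, prod_Ioc_succ_top t.zero_le,
      prod_range_succ _ (t + 1), Real.mul_rpow (by positivity) (by positivity)]
    ring

end MatrixProduct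

/-- moment estimate for matrix entries: for `α ≥ 1/2` and `p ≥ 1` there is a
constant `C` (depending only on `α` and `p`) such that for a product `P = A⁽¹⁾ ⋯ A⁽ᵖ⁾` of
independent random matrices with i.i.d. centered entries with finite moment of order `2α`,
`E[|P_{ij}|^{2α}] ≤ C (n₁ ⋯ n_{p-1})^{max(α,1)} E[|A⁽¹⁾₁₁|^{2α}] ⋯ E[|A⁽ᵖ⁾₁₁|^{2α}]`. -/
theorem moment_estimate_product_entries
    (α : ℝ) (hα : (1 : ℝ) / 2 ≤ α) (p : ℕ) (hp : 1 ≤ p) :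
    ∃ C : ℝ, ∀ (Ω : Type) [MeasureSpace Ω] [IsProbabilityMeasure (ℙ : Measure Ω)],
    ∀ n : ℕ → ℕ, ∀ A : ℕ → ℕ → ℕ → Ω → ℝ,
      (∀ q i j, Measurable (A q i j)) →
      iIndepFun (fun t : ℕ × ℕ × ℕ => A t.1 t.2.1 t.2.2) ℙ →
      (∀ q i j, IdentDistrib (A q i j) (A q 0 0) ℙ ℙ) →
      (∀ q, ∫ ω, A q 0 0 ω ∂ℙ = 0) →
      (∀ q < p, Integrable (fun ω => |A q 0 0 ω| ^ (2 * α)) ℙ) →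
      ∀ i < n 0, ∀ j < n p,
        (∫ ω, |matProd n (fun q i j => A q i j ω) (p - 1) i j| ^ (2 * α) ∂ℙ) ≤
          C * (∏ q ∈ Finset.Ioo 0 p, (n q : ℝ)) ^ (max α 1) *
            ∏ q ∈ Finset.range p, ∫ ω, |A q 0 0 ω| ^ (2 * α) ∂ℙ := by
  refine ⟨momentConst (2 * α) ^ (p - 1), fun Ω _ _ n A hA hind hid hcen hint i _ j _ => ?_⟩
  have hr : 1 ≤ 2 * α := by linarith
  have hL : ∀ q ≤ p - 1, ∀ i j, MemLp (A q i j) (ENNReal.ofReal (2 * α)) ℙ := fun q hq i j =>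
    (hid q i j).symm.memLp_snd <| (memLp_ofReal_iff_integrable_abs_rpow (by linarith)
      (hA q 0 0).aestronglyMeasurable).2 (hint q (by omega))
  have hmom : ∀ q i j, ∫ ω, |A q i j ω| ^ (2 * α) = ∫ ω, |A q 0 0 ω| ^ (2 * α) := fun q i j =>
    ((hid q i j).comp (measurable_abs.pow_const _)).integral_eq
  have h := integral_abs_matProd_rpow_le hr n hA hind hL
    (fun q _ i j => (hid q i j).integral_eq.trans (hcen q)) (fun q _ i j => (hmom q i j).le) i j
  rwa [Nat.sub_add_cancel hp, show 2 * α / 2 = α by ring] at h
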